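/- arXiv:1711.00890 — 3 statements merged into one kernel-verified Lean document; each statement's English description precedes it below -/
import Mathlib

section
/- Let $T : \mathcal{S} \to V$ be a $\sigma$-additive set function on a $\delta$-ring $\mathcal{S}$ with values in a finite-dimensional normed space $V$. Then the total variation $|T|$ is a finite (i.e. $[0,\infty)$-valued) pre-measure on $\mathcal{S}$, i.e. $|T|(\emptyset)=0$, $|T|$ is $\sigma$-additive, and $|T|(A) < \infty$ for all $A \in \mathcal{S}$. -/
/-!
Monotonicity and superadditivity of `|T|` on disjoint sets give `∑ |T|(Aₙ) ≤ |T|(⋃ Aₙ)`;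
conversely, cutting each piece of a finite partition of `⋃ Aₙ` along the `Aₙ` and using the
σ-additivity of `T` gives the reverse inequality. For finiteness, the sets `s` with `s ∩ A ∈ 𝒮`
form a σ-algebra on which `s ↦ T (s ∩ A)` is a vector measure. In finite dimension its
coordinates in a basis are signed measures, whose total variations are finite measures
(Jordan decomposition) and dominate `‖T‖` up to the norms of the basis vectors.
-/

open Set MeasureTheory
open scoped ENNReal

namespace MeasureTheory.VectorMeasure

variable {X V : Type*} [MeasurableSpace X] [NormedAddCommGroup V] [NormedSpace ℝ V]
  [FiniteDimensional ℝ V]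

instance isFiniteMeasure_variation (μ : VectorMeasure X V) : IsFiniteMeasure μ.variation := by
  let b := Module.finBasis ℝ V
  let σ : _ → SignedMeasure X := fun i =>
    μ.mapRange (b.coord i).toAddMonoidHom (b.coord i).continuous_of_finiteDimensional
  have hle : μ.variation ≤ ∑ i, ‖b i‖₊ • (σ i).totalVariation := by
    refine variation_le_of_forall_enorm_le fun E _ => ?_
    calc ‖μ E‖ₑ = ‖∑ i, b.repr (μ E) i • b i‖ₑ := by rw [b.sum_repr]
      _ ≤ ∑ i, ‖b.repr (μ E) i • b i‖ₑ := enorm_sum_le _ _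
      _ = ∑ i, ‖b i‖ₑ * ‖σ i E‖ₑ := by
        refine Finset.sum_congr rfl fun i _ => ?_
        rw [enorm_smul, mul_comm]
        rfl
      _ ≤ ∑ i, ‖b i‖ₑ * (σ i).totalVariation E := by
        gcongr; exact SignedMeasure.enorm_le_totalVariation _ _
      _ = (∑ i, ‖b i‖₊ • (σ i).totalVariation) E := by simp [enorm_eq_nnnorm]
  exact isFiniteMeasure_of_le _ hle

end MeasureTheory.VectorMeasure

section DeltaRing

variable {S : Type*} {𝒮 : Set (Set S)} {A : Set S}

theorem iUnion_mem_of_subset (hdiff : ∀ A ∈ 𝒮, ∀ B ∈ 𝒮, A \ B ∈ 𝒮)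
    (hinter : ∀ f : ℕ → Set S, (∀ n, f n ∈ 𝒮) → (⋂ n, f n) ∈ 𝒮) (hA : A ∈ 𝒮)
    {B : ℕ → Set S} (hB : ∀ n, B n ∈ 𝒮) (hBA : ∀ n, B n ⊆ A) : (⋃ n, B n) ∈ 𝒮 := by
  have hcompl : (⋃ n, B n) = A \ ⋂ n, A \ B n := by
    simp_rw [sdiff_iInter, sdiff_sdiff_cancel_left (hBA _)]
  exact hcompl ▸ hdiff A hA _ (hinter _ fun n => hdiff A hA _ (hB n))

abbrev traceMeasurableSpace (hdiff : ∀ A ∈ 𝒮, ∀ B ∈ 𝒮, A \ B ∈ 𝒮)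
    (hinter : ∀ f : ℕ → Set S, (∀ n, f n ∈ 𝒮) → (⋂ n, f n) ∈ 𝒮) (hA : A ∈ 𝒮) :
    MeasurableSpace S where
  MeasurableSet' s := s ∩ A ∈ 𝒮
  measurableSet_empty := by simpa using hdiff A hA A hA
  measurableSet_compl s hs := by
    rw [← sdiff_eq_compl_inter, ← sdiff_inter_self_eq_sdiff]
    exact hdiff A hA _ hs
  measurableSet_iUnion f hf := by
    rw [iUnion_inter]
    exact iUnion_mem_of_subset hdiff hinter hA hf fun n => inter_subset_right

end DeltaRing

namespace SetFunction

variable {S V : Type*} {𝒮 : Set (Set S)} {T : Set S → V} {A B : Set S}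

def IsSigmaAdditiveOn [AddCommMonoid V] [TopologicalSpace V] (𝒮 : Set (Set S)) (T : Set S → V) :
    Prop :=
  ∀ f : ℕ → Set S, (∀ n, f n ∈ 𝒮) → Pairwise (Function.onFun Disjoint f) →
    (⋃ n, f n) ∈ 𝒮 → HasSum (fun n => T (f n)) (T (⋃ n, f n))

noncomputable def variation [Norm V] (𝒮 : Set (Set S)) (T : Set S → V) (A : Set S) : ℝ≥0∞ :=
  sSup {x : ℝ≥0∞ | ∃ (n : ℕ) (g : Fin n → Set S),
    (∀ j, g j ∈ 𝒮 ∧ g j ⊆ A) ∧ Pairwise (Function.onFun Disjoint g) ∧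
    x = ∑ j, (ENNReal.ofReal ‖T (g j)‖)}

section Norm

variable [Norm V]

theorem sum_le_variation {ι : Type*} [Fintype ι] {g : ι → Set S} (hg : ∀ j, g j ∈ 𝒮 ∧ g j ⊆ A)
    (hdisj : Pairwise (Function.onFun Disjoint g)) :
    ∑ j, ENNReal.ofReal ‖T (g j)‖ ≤ variation 𝒮 T A := by
  let e := Fintype.equivFin ι
  refine le_sSup ⟨Fintype.card ι, g ∘ e.symm, fun j => hg _,
    hdisj.comp_of_injective e.symm.injective, ?_⟩
  exact (e.symm.sum_comp fun j => ENNReal.ofReal ‖T (g j)‖).symm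

theorem variation_le {c : ℝ≥0∞}
    (h : ∀ (n : ℕ) (g : Fin n → Set S), (∀ j, g j ∈ 𝒮 ∧ g j ⊆ A) →
      Pairwise (Function.onFun Disjoint g) → ∑ j, ENNReal.ofReal ‖T (g j)‖ ≤ c) :
    variation 𝒮 T A ≤ c :=
  sSup_le fun _ ⟨n, g, hg, hdisj, hx⟩ => hx ▸ h n g hg hdisj

theorem variation_mono (hAB : A ⊆ B) : variation 𝒮 T A ≤ variation 𝒮 T B :=
  variation_le fun _ _ hg hdisj =>
    sum_le_variation (fun j => ⟨(hg j).1, (hg j).2.trans hAB⟩) hdisj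

theorem variation_add_le_union (hAB : Disjoint A B) :
    variation 𝒮 T A + variation 𝒮 T B ≤ variation 𝒮 T (A ∪ B) := by
  have hne : ∀ C : Set S, ∃ x, ∃ (n : ℕ) (g : Fin n → Set S),
      (∀ j, g j ∈ 𝒮 ∧ g j ⊆ C) ∧ Pairwise (Function.onFun Disjoint g) ∧
      x = ∑ j, (ENNReal.ofReal ‖T (g j)‖) :=
    fun _ => ⟨0, 0, Fin.elim0, nofun, nofun, by simp⟩
  rw [variation, variation, sSup_eq_iSup, sSup_eq_iSup]
  refine ENNReal.biSup_add_biSup_le (hne A) (hne B) ?_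
  rintro _ ⟨m, g, hg, hdg, rfl⟩ _ ⟨k, h, hh, hdh, rfl⟩
  have hsub : ∀ j, Sum.elim g h j ∈ 𝒮 ∧ Sum.elim g h j ⊆ A ∪ B := by
    rintro (j | j)
    · exact ⟨(hg j).1, (hg j).2.trans subset_union_left⟩
    · exact ⟨(hh j).1, (hh j).2.trans subset_union_right⟩
  have hdisj : Pairwise (Function.onFun Disjoint (Sum.elim g h)) := by
    rintro (i | i) (j | j) hij <;> simp only [Function.onFun, Sum.elim_inl, Sum.elim_inr]
    · exact hdg fun hc => hij (congrArg _ hc)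
    · exact hAB.mono (hg i).2 (hh j).2
    · exact (hAB.mono (hg j).2 (hh i).2).symm
    · exact hdh fun hc => hij (congrArg _ hc)
  have := sum_le_variation (T := T) hsub hdisj
  rwa [Fintype.sum_sum_type] at this

theorem tsum_variation_le_variation_iUnion {f : ℕ → Set S}
    (hdisj : Pairwise (Function.onFun Disjoint f)) :
    ∑' n, variation 𝒮 T (f n) ≤ variation 𝒮 T (⋃ n, f n) := by
  rw [ENNReal.tsum_eq_iSup_sum]
  refine iSup_le fun t => ?_
  calc ∑ n ∈ t, variation 𝒮 T (f n) ≤ variation 𝒮 T (⋃ n ∈ t, f n) := ?_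
    _ ≤ variation 𝒮 T (⋃ n, f n) := variation_mono (iUnion₂_subset fun n _ => subset_iUnion f n)
  induction t using Finset.induction_on with
  | empty => simp
  | insert a t ha ih =>
    rw [Finset.sum_insert ha, Finset.set_biUnion_insert]
    refine (add_le_add_right ih _).trans (variation_add_le_union ?_)
    exact disjoint_iUnion₂_right.mpr fun n hn => hdisj fun h => ha (h ▸ hn)

end Norm

theorem exists_vectorMeasure_eq_of_subset [AddCommMonoid V] [TopologicalSpace V]
    (hdiff : ∀ A ∈ 𝒮, ∀ B ∈ 𝒮, A \ B ∈ 𝒮)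
    (hinter : ∀ f : ℕ → Set S, (∀ n, f n ∈ 𝒮) → (⋂ n, f n) ∈ 𝒮)
    (hT0 : T ∅ = 0) (hT : IsSigmaAdditiveOn 𝒮 T) (hA : A ∈ 𝒮) :
    ∃ (m : MeasurableSpace S) (μ : @VectorMeasure S m V _ _),
      ∀ B ∈ 𝒮, B ⊆ A → MeasurableSet[m] B ∧ μ B = T B := by
  classical
  let m := traceMeasurableSpace hdiff hinter hA
  refine ⟨m,
    { measureOf' := fun s => if s ∩ A ∈ 𝒮 then T (s ∩ A) else 0
      empty' := by simp [hT0]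
      not_measurable' := fun s hs => if_neg hs
      m_iUnion' := fun f hf hdisj => ?_ }, fun B hB hBA => ?_⟩
  · have hmem : ∀ n, f n ∩ A ∈ 𝒮 := hf
    have hU : (⋃ n, f n ∩ A) ∈ 𝒮 :=
      iUnion_mem_of_subset hdiff hinter hA hmem fun n => inter_subset_right
    simp only [if_pos (hmem _), iUnion_inter, if_pos hU]
    exact hT _ hmem (fun i j hij => (hdisj hij).mono inter_subset_left inter_subset_left) hU
  · have hBm : B ∩ A = B := inter_eq_left.mpr hBA
    refine ⟨show B ∩ A ∈ 𝒮 by rwa [hBm], ?_⟩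
    show (if B ∩ A ∈ 𝒮 then T (B ∩ A) else 0) = T B
    rw [hBm, if_pos hB]

theorem variation_empty [SeminormedAddGroup V] (hT0 : T ∅ = 0) : variation 𝒮 T ∅ = 0 :=
  le_antisymm (variation_le fun _ _ hg _ => by simp [subset_empty_iff.mp (hg _).2, hT0]) bot_le

theorem variation_iUnion_le_tsum [NormedAddCommGroup V]
    (hdiff : ∀ A ∈ 𝒮, ∀ B ∈ 𝒮, A \ B ∈ 𝒮) (hT : IsSigmaAdditiveOn 𝒮 T) {f : ℕ → Set S}
    (hf : ∀ n, f n ∈ 𝒮) (hdisj : Pairwise (Function.onFun Disjoint f)) :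
    variation 𝒮 T (⋃ n, f n) ≤ ∑' n, variation 𝒮 T (f n) := by
  refine variation_le fun m g hg hdg => ?_
  have hmem : ∀ j n, g j ∩ f n ∈ 𝒮 := fun j n => by
    rw [← sdiff_sdiff_right_self]
    exact hdiff _ (hg j).1 _ (hdiff _ (hg j).1 _ (hf n))
  have hsplit : ∀ j, ENNReal.ofReal ‖T (g j)‖ ≤ ∑' n, ENNReal.ofReal ‖T (g j ∩ f n)‖ := by
    intro j
    have hpart : (⋃ n, g j ∩ f n) = g j := by rw [← inter_iUnion, inter_eq_left.mpr (hg j).2]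
    have hsum := hT (fun n => g j ∩ f n) (hmem j)
      (fun a b hab => (hdisj hab).mono inter_subset_right inter_subset_right)
      (by rw [hpart]; exact (hg j).1)
    rw [hpart] at hsum
    simp only [ofReal_norm, ← hsum.tsum_eq]
    exact enorm_tsum_le_tsum_enorm
  calc ∑ j, ENNReal.ofReal ‖T (g j)‖
      ≤ ∑ j, ∑' n, ENNReal.ofReal ‖T (g j ∩ f n)‖ := Finset.sum_le_sum fun j _ => hsplit j
    _ = ∑' n, ∑ j, ENNReal.ofReal ‖T (g j ∩ f n)‖ :=
      (Summable.tsum_finsetSum fun j _ => ENNReal.summable).symm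
    _ ≤ ∑' n, variation 𝒮 T (f n) := ENNReal.tsum_le_tsum fun n =>
      sum_le_variation (fun j => ⟨hmem j n, inter_subset_right⟩)
        fun a b hab => (hdg hab).mono inter_subset_left inter_subset_left

theorem variation_lt_top [NormedAddCommGroup V] [NormedSpace ℝ V] [FiniteDimensional ℝ V]
    (hdiff : ∀ A ∈ 𝒮, ∀ B ∈ 𝒮, A \ B ∈ 𝒮)
    (hinter : ∀ f : ℕ → Set S, (∀ n, f n ∈ 𝒮) → (⋂ n, f n) ∈ 𝒮)
    (hT0 : T ∅ = 0) (hT : IsSigmaAdditiveOn 𝒮 T) (hA : A ∈ 𝒮) :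
    variation 𝒮 T A < ∞ := by
  obtain ⟨m, μ, hμ⟩ := exists_vectorMeasure_eq_of_subset hdiff hinter hT0 hT hA
  refine (variation_le fun n g hg hdg => ?_).trans_lt (measure_lt_top μ.variation univ)
  have hgm : ∀ j, MeasurableSet (g j) := fun j => (hμ _ (hg j).1 (hg j).2).1
  calc ∑ j, ENNReal.ofReal ‖T (g j)‖
      = ∑ j, ‖μ (g j)‖ₑ := by simp only [ofReal_norm, (hμ _ (hg _).1 (hg _).2).2]
    _ ≤ ∑ j, μ.variation (g j) := Finset.sum_le_sum fun j _ => μ.enorm_measure_le_variation _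
    _ = μ.variation (⋃ j, g j) := by rw [measure_iUnion hdg hgm, tsum_fintype]
    _ ≤ μ.variation univ := measure_mono (subset_univ _)

end SetFunction

open SetFunction

theorem stmt_5_general {S : Type*} {V : Type*} [NormedAddCommGroup V] [NormedSpace ℝ V]
    [FiniteDimensional ℝ V]
    (𝒮 : Set (Set S))
    (hdiff : ∀ A ∈ 𝒮, ∀ B ∈ 𝒮, A \ B ∈ 𝒮)
    (hinter : ∀ f : ℕ → Set S, (∀ n, f n ∈ 𝒮) → (⋂ n, f n) ∈ 𝒮)
    (T : Set S → V)
    (hT0 : T ∅ = 0)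
    (hTσ : ∀ f : ℕ → Set S, (∀ n, f n ∈ 𝒮) → Pairwise (Function.onFun Disjoint f) →
      (⋃ n, f n) ∈ 𝒮 → HasSum (fun n => T (f n)) (T (⋃ n, f n)))
    (tv : Set S → ENNReal)
    (htv : ∀ A, tv A = sSup {x : ENNReal | ∃ (n : ℕ) (g : Fin n → Set S),
      (∀ j, g j ∈ 𝒮 ∧ g j ⊆ A) ∧ Pairwise (Function.onFun Disjoint g) ∧
      x = ∑ j, (ENNReal.ofReal ‖T (g j)‖)}) :
    tv ∅ = 0 ∧
    (∀ f : ℕ → Set S, (∀ n, f n ∈ 𝒮) → Pairwise (Function.onFun Disjoint f) →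
      (⋃ n, f n) ∈ 𝒮 → tv (⋃ n, f n) = ∑' n, tv (f n)) ∧
    (∀ A ∈ 𝒮, tv A < ⊤) := by
  obtain rfl : tv = variation 𝒮 T := funext htv
  refine ⟨variation_empty hT0, fun f hf hdisj _ => ?_,
    fun A hA => variation_lt_top hdiff hinter hT0 hTσ hA⟩
  exact le_antisymm (variation_iUnion_le_tsum hdiff hTσ hf hdisj)
    (tsum_variation_le_variation_iUnion hdisj)

/-- For a σ-additive set function `T` on a δ-ring with values in a finite-dimensional
normed space, the total variation `|T|` is a finite pre-measure. -/
theorem stmt_5 {S : Type*} {V : Type*} [NormedAddCommGroup V] [NormedSpace ℝ V]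
    [FiniteDimensional ℝ V]
    (𝒮 : Set (Set S))
    (hempty : ∅ ∈ 𝒮)
    (hunion : ∀ A ∈ 𝒮, ∀ B ∈ 𝒮, A ∪ B ∈ 𝒮)
    (hdiff : ∀ A ∈ 𝒮, ∀ B ∈ 𝒮, A \ B ∈ 𝒮)
    (hinter : ∀ f : ℕ → Set S, (∀ n, f n ∈ 𝒮) → (⋂ n, f n) ∈ 𝒮)
    (hcov : ∃ f : ℕ → Set S, (∀ n, f n ∈ 𝒮) ∧ (⋃ n, f n) = univ)
    (T : Set S → V)
    (hT0 : T ∅ = 0)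
    (hTσ : ∀ f : ℕ → Set S, (∀ n, f n ∈ 𝒮) → Pairwise (Function.onFun Disjoint f) →
      (⋃ n, f n) ∈ 𝒮 → HasSum (fun n => T (f n)) (T (⋃ n, f n)))
    (tv : Set S → ENNReal)
    (htv : ∀ A, tv A = sSup {x : ENNReal | ∃ (n : ℕ) (g : Fin n → Set S),
      (∀ j, g j ∈ 𝒮 ∧ g j ⊆ A) ∧ Pairwise (Function.onFun Disjoint g) ∧
      x = ∑ j, (ENNReal.ofReal ‖T (g j)‖)}) :
    tv ∅ = 0 ∧
    (∀ f : ℕ → Set S, (∀ n, f n ∈ 𝒮) → Pairwise (Function.onFun Disjoint f) →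
      (⋃ n, f n) ∈ 𝒮 → tv (⋃ n, f n) = ∑' n, tv (f n)) ∧
    (∀ A ∈ 𝒮, tv A < ⊤) :=
  stmt_5_general 𝒮 hdiff hinter T hT0 hTσ tv htv
end

section
/- For $g(y) := \sin(y)/y$ ($y \ne 0$), $g(0) := 1$, and any $\delta, \gamma > 0$, there exists a constant $C(\delta,\gamma) \in (0,1)$ such that $1 - \prod_{j=1}^m g(\delta x_j) \ge C(\delta,\gamma)$ for every $x = (x_1,\dots,x_m) \in \mathbb{R}^m$ with $\|x\| \ge \gamma$. -/
/-!
Some coordinate of `x` has `|xⱼ| ≥ ‖x‖ / √m`, so `δ xⱼ` stays at distance at least `δγ / √m`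
from `0`, where `|sinc|` is bounded away from `1`; every other factor has `|sinc| ≤ 1`.
-/

open Set Real

namespace Real

lemma abs_sinc_lt_one {x : ℝ} (hx : x ≠ 0) : |sinc x| < 1 := by
  rw [sinc_of_ne_zero hx, abs_div, div_lt_one (abs_pos.2 hx)]
  exact abs_sin_lt_abs hx

lemma abs_sinc_le_inv_abs {x : ℝ} (hx : x ≠ 0) : |sinc x| ≤ |x|⁻¹ := by
  rw [sinc_of_ne_zero hx, abs_div, div_eq_mul_inv]
  exact mul_le_of_le_one_left (by positivity) (abs_sin_le_one x)

/-- On the compact set `a ≤ |y| ≤ 2` the bound follows from `|sinc| < 1` by compactness;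
beyond it, `|sinc y| ≤ 1 / |y| < 1 / 2`. -/
lemma exists_forall_abs_sinc_le_one_sub {a : ℝ} (ha : 0 < a) :
    ∃ c ∈ Ioo (0 : ℝ) 1, ∀ y, a ≤ |y| → |sinc y| ≤ 1 - c := by
  let K : Set ℝ := {y | a ≤ |y|} ∩ Metric.closedBall 0 2
  have hK : IsCompact K :=
    (isCompact_closedBall 0 2).inter_left (isClosed_le continuous_const continuous_abs)
  obtain ⟨c, hc, hcK⟩ := hK.exists_forall_le' (f := fun y ↦ 1 - |sinc y|)
    (by fun_prop) fun y hy ↦ sub_pos.2 (abs_sinc_lt_one (abs_pos.1 (ha.trans_le hy.1)))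
  refine ⟨min c (1 / 2), ⟨by positivity, by linarith [min_le_right c (1 / 2)]⟩, fun y hy ↦ ?_⟩
  rcases le_or_gt |y| 2 with hy2 | hy2
  · have := hcK y ⟨hy, mem_closedBall_zero_iff.2 hy2⟩
    linarith [min_le_left c (1 / 2)]
  · calc |sinc y| ≤ |y|⁻¹ := abs_sinc_le_inv_abs (abs_pos.1 (two_pos.trans hy2))
      _ ≤ 2⁻¹ := inv_anti₀ two_pos hy2.le
      _ ≤ 1 - min c (1 / 2) := by linarith [min_le_right c (1 / 2)]

end Real

lemma Finset.abs_prod_le_abs_of_abs_le_one {ι R : Type*} [CommRing R] [LinearOrder R]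
    [IsStrictOrderedRing R] {s : Finset ι} {f : ι → R} (hf : ∀ i ∈ s, |f i| ≤ 1) {j : ι}
    (hj : j ∈ s) : |∏ i ∈ s, f i| ≤ |f j| := by
  classical
  rw [Finset.abs_prod, ← Finset.mul_prod_erase s _ hj]
  exact mul_le_of_le_one_right (abs_nonneg _) <|
    Finset.prod_le_one (fun i _ ↦ abs_nonneg _) fun i hi ↦ hf i (Finset.mem_of_mem_erase hi)

lemma EuclideanSpace.exists_norm_le_sqrt_card_mul_abs {ι : Type*} [Fintype ι]
    {x : EuclideanSpace ℝ ι} (hx : x ≠ 0) : ∃ j, ‖x‖ ≤ √(Fintype.card ι) * |x j| := by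
  have : Nonempty ι := by
    contrapose! hx
    exact Subsingleton.elim _ _
  obtain ⟨j, hj⟩ := Finite.exists_max fun i ↦ |x i|
  refine ⟨j, ?_⟩
  calc ‖x‖ = √(∑ i, ‖x i‖ ^ 2) := EuclideanSpace.norm_eq x
    _ ≤ √(∑ _i : ι, |x j| ^ 2) := by
      gcongr with i
      rw [Real.norm_eq_abs]
      exact hj i
    _ = √(Fintype.card ι) * |x j| := by
      rw [Finset.sum_const, Finset.card_univ, nsmul_eq_mul, sqrt_mul (Nat.cast_nonneg _),
        sqrt_sq (abs_nonneg _)]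

/-- For `g(y) = sin y / y` (`g(0) = 1`) and `δ, γ > 0`, there is `C ∈ (0,1)` with
`1 - ∏ⱼ g(δ xⱼ) ≥ C` whenever `‖x‖ ≥ γ`. -/
theorem stmt_12 {m : ℕ} (g : ℝ → ℝ)
    (hg : ∀ y : ℝ, g y = if y = 0 then 1 else Real.sin y / y)
    (δ γ : ℝ) (hδ : 0 < δ) (hγ : 0 < γ) :
    ∃ C ∈ Ioo (0 : ℝ) 1, ∀ x : EuclideanSpace ℝ (Fin m),
      γ ≤ ‖x‖ → C ≤ 1 - ∏ j, g (δ * x j) := by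
  obtain rfl : g = sinc := funext hg
  -- `m + 1` rather than `m` keeps the threshold positive when `m = 0`
  obtain ⟨C, hC, hsinc⟩ :=
    exists_forall_abs_sinc_le_one_sub (a := δ * γ / √(m + 1)) (by positivity)
  refine ⟨C, hC, fun x hx ↦ ?_⟩
  obtain ⟨j, hj⟩ :=
    EuclideanSpace.exists_norm_le_sqrt_card_mul_abs (norm_pos_iff.1 (hγ.trans_le hx))
  have hxj : δ * γ / √(m + 1) ≤ |δ * x j| := by
    rw [abs_mul, abs_of_pos hδ, mul_div_assoc]
    gcongr
    rw [div_le_iff₀ (by positivity)]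
    calc γ ≤ √m * |x j| := by simpa using hx.trans hj
      _ ≤ |x j| * √(m + 1) := by rw [mul_comm]; gcongr; linarith
  calc C ≤ 1 - |sinc (δ * x j)| := by linarith [hsinc _ hxj]
    _ ≤ 1 - |∏ i, sinc (δ * x i)| := sub_le_sub_left
      (Finset.abs_prod_le_abs_of_abs_le_one (f := fun i ↦ sinc (δ * x i))
        (fun i _ ↦ abs_sinc_le_one _) (Finset.mem_univ j)) 1
    _ ≤ 1 - ∏ i, sinc (δ * x i) := sub_le_sub_left (le_abs_self _) 1
end

section
/- Let $X$ be an $\mathbb{R}^m$-valued random vector with characteristic function $\varphi$, and let $h(y) := \|y\|\cdot \mathbf{1}_{\{\|y\| \le 1\}}$. Then for every $t \in \mathbb{R}^m$: $|1 - \varphi(t)| \le \tfrac{\|t\|^2}{2}\,\mathrm{Var}(h(X)) + \left(\tfrac{\|t\|^2}{2} + \|t\|\right) \mathbb{E}[h(X)] + 2\,\mathbb{P}(\|X\| > 1)$. -/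
/-!
Writing `1 - φ(t) = 𝔼[1 - exp(i⟪t, X⟫)]`, the integrand is at most `|⟪t, X⟫| ≤ ‖t‖ ‖X‖` on
`{‖X‖ ≤ 1}` and at most `2` on `{‖X‖ > 1}`, so `|1 - φ(t)| ≤ ‖t‖ 𝔼[h(X)] + 2 ℙ(‖X‖ > 1)`.
The remaining terms of the stated bound add up to `‖t‖²/2 · (𝔼[h(X)²] + 𝔼[h(X)] - 𝔼[h(X)]²)`,
which is nonnegative because `0 ≤ h ≤ 1`.
-/

open MeasureTheory RealInnerProductSpace Complex

section TruncatedNorm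

variable {E : Type*}

noncomputable def truncatedNorm [Norm E] (x : E) : ℝ := if ‖x‖ ≤ 1 then ‖x‖ else 0

variable [SeminormedAddCommGroup E]

lemma truncatedNorm_nonneg (x : E) : 0 ≤ truncatedNorm x := by
  unfold truncatedNorm
  split_ifs <;> simp

lemma truncatedNorm_le_one (x : E) : truncatedNorm x ≤ 1 := by
  unfold truncatedNorm
  split_ifs with hx <;> simp [hx]

lemma measurable_truncatedNorm [MeasurableSpace E] [OpensMeasurableSpace E] :
    Measurable (truncatedNorm : E → ℝ) :=
  continuous_norm.measurable.ite
    (measurableSet_le continuous_norm.measurable measurable_const) measurable_const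

lemma integrable_truncatedNorm [MeasurableSpace E] [OpensMeasurableSpace E] (μ : Measure E)
    [IsFiniteMeasure μ] : Integrable truncatedNorm μ :=
  (integrable_const (1 : ℝ)).mono' measurable_truncatedNorm.aestronglyMeasurable
    (ae_of_all _ fun x => (Real.norm_of_nonneg (truncatedNorm_nonneg x)).trans_le
      (truncatedNorm_le_one x))

end TruncatedNorm

section CharFun

variable {E : Type*} [NormedAddCommGroup E] [InnerProductSpace ℝ E]

lemma norm_one_sub_exp_inner_mul_I_le (x t : E) :
    ‖1 - exp (⟪x, t⟫ * I)‖ ≤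
      ‖t‖ * truncatedNorm x + {y : E | 1 < ‖y‖}.indicator (fun _ => (2 : ℝ)) x := by
  by_cases hx : ‖x‖ ≤ 1
  · have hx' : x ∉ {y : E | 1 < ‖y‖} := by simpa using hx
    rw [truncatedNorm, if_pos hx, Set.indicator_of_notMem hx', add_zero, norm_sub_rev,
      mul_comm _ I]
    calc ‖exp (I * ⟪x, t⟫) - 1‖ ≤ ‖⟪x, t⟫‖ := Real.norm_exp_I_mul_ofReal_sub_one_le
      _ ≤ ‖x‖ * ‖t‖ := norm_inner_le_norm x t
      _ = ‖t‖ * ‖x‖ := mul_comm _ _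
  · have hx' : x ∈ {y : E | 1 < ‖y‖} := by simpa using hx
    rw [truncatedNorm, if_neg hx, Set.indicator_of_mem hx', mul_zero, zero_add]
    calc ‖1 - exp (⟪x, t⟫ * I)‖ ≤ ‖(1 : ℂ)‖ + ‖exp (⟪x, t⟫ * I)‖ := norm_sub_le _ _
      _ = 2 := by rw [norm_exp_ofReal_mul_I]; norm_num

lemma norm_one_sub_charFun_le [MeasurableSpace E] [OpensMeasurableSpace E] (μ : Measure E)
    [IsProbabilityMeasure μ] (t : E) :
    ‖1 - charFun μ t‖ ≤ ‖t‖ * ∫ x, truncatedNorm x ∂μ + 2 * μ.real {x | 1 < ‖x‖} := by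
  have hS : MeasurableSet {x : E | 1 < ‖x‖} := measurableSet_lt measurable_const measurable_norm
  have h_exp : Integrable (fun x => exp (⟪x, t⟫ * I)) μ :=
    Integrable.of_bound (by fun_prop) 1 (ae_of_all _ fun x => (norm_exp_ofReal_mul_I _).le)
  have h_tail : Integrable ({x : E | 1 < ‖x‖}.indicator fun _ => (2 : ℝ)) μ :=
    (integrable_const _).indicator hS
  have h_trunc := (integrable_truncatedNorm μ).const_mul ‖t‖
  calc ‖1 - charFun μ t‖ = ‖∫ x, (1 - exp (⟪x, t⟫ * I)) ∂μ‖ := by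
        rw [charFun_apply, integral_sub (integrable_const 1) h_exp, integral_const]
        simp
    _ ≤ ∫ x, ‖1 - exp (⟪x, t⟫ * I)‖ ∂μ := norm_integral_le_integral_norm _
    _ ≤ ∫ x, (‖t‖ * truncatedNorm x + {y : E | 1 < ‖y‖}.indicator (fun _ => (2 : ℝ)) x) ∂μ :=
        integral_mono ((integrable_const 1).sub h_exp).norm (h_trunc.add h_tail)
          fun x => norm_one_sub_exp_inner_mul_I_le x t
    _ = ‖t‖ * ∫ x, truncatedNorm x ∂μ + 2 * μ.real {x | 1 < ‖x‖} := by
        rw [integral_add h_trunc h_tail, integral_const_mul, integral_indicator_const _ hS]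
        simp [mul_comm]

end CharFun

/-- Estimate for `|1 - φ(t)|` in terms of the truncated first and second moments of
`X` and the tail probability `P(‖X‖ > 1)`. -/
theorem stmt_19 {Ω : Type*} [MeasureSpace Ω] [IsProbabilityMeasure (volume : Measure Ω)]
    {m : ℕ} (X : Ω → EuclideanSpace ℝ (Fin m)) (hX : Measurable X)
    (φ : EuclideanSpace ℝ (Fin m) → ℂ)
    (hφ : ∀ t, φ t = ∫ ω, Complex.exp (Complex.I * (⟪t, X ω⟫ : ℝ)))
    (h : EuclideanSpace ℝ (Fin m) → ℝ)
    (hh : ∀ y, h y = if ‖y‖ ≤ 1 then ‖y‖ else 0) :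
    ∀ t, ‖1 - φ t‖ ≤
      ‖t‖ ^ 2 / 2 * ((∫ ω, (h (X ω)) ^ 2) - (∫ ω, h (X ω)) ^ 2) +
      (‖t‖ ^ 2 / 2 + ‖t‖) * (∫ ω, h (X ω)) +
      2 * (volume {ω | 1 < ‖X ω‖}).toReal := by
  intro t
  obtain rfl : h = truncatedNorm := funext hh
  have : IsProbabilityMeasure (volume.map X) := Measure.isProbabilityMeasure_map hX.aemeasurable
  have h_law := norm_one_sub_charFun_le (volume.map X) t
  have hφ_law : charFun (volume.map X) t = φ t := by
    rw [hφ, charFun_apply, integral_map hX.aemeasurable (by fun_prop)]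
    simp_rw [real_inner_comm t, mul_comm I]
  rw [hφ_law, integral_map hX.aemeasurable measurable_truncatedNorm.aestronglyMeasurable,
    map_measureReal_apply hX (measurableSet_lt measurable_const measurable_norm),
    measureReal_def, Set.preimage_ofPred_eq] at h_law
  have h_mean_nonneg : 0 ≤ ∫ ω, truncatedNorm (X ω) :=
    integral_nonneg fun ω => truncatedNorm_nonneg (X ω)
  have h_mean_le_one : ∫ ω, truncatedNorm (X ω) ≤ 1 := by
    simpa using integral_mono ((integrable_truncatedNorm (volume.map X)).comp_measurable hX)
      (integrable_const 1) fun ω => truncatedNorm_le_one (X ω)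
  have h_sq_nonneg : 0 ≤ ∫ ω, truncatedNorm (X ω) ^ 2 := integral_nonneg fun ω => sq_nonneg _
  refine h_law.trans ?_
  nlinarith [mul_nonneg (sq_nonneg ‖t‖) (mul_nonneg h_mean_nonneg (sub_nonneg.2 h_mean_le_one))]
end
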